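/- arXiv:2001.09780 — 2 statements merged into one kernel-verified Lean document; each statement's English description precedes it below -/
import Mathlib

section
/- Let T(q, q̇, t) = ½ Ẋ^{(M)} · Ẋ be the kinetic energy expressed in generalized coordinates. Then along any C² motion, Q̇ · ∂X/∂qᵢ = d/dt (∂T/∂q̇ᵢ) − ∂T/∂qᵢ for every i = 1,…,n, where Q̇ is the time derivative of the momentum vector Q = Ẋ^{(M)}. -/
open Matrix

/-!
Write the motion as `X : E × ℝ → F` with derivative `L = DX(q, t)`, so that `Ẋ = L (q̇, 1)`,
`∂X/∂qᵢ = L (eᵢ, 0)`, and let `B u w = (M u) ⬝ᵥ w`. Then `∂T/∂q̇ᵢ = B Ẋ (L (eᵢ, 0))` and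
`∂T/∂qᵢ = B Ẋ (D²X (eᵢ, 0) (q̇, 1))`. Differentiating the first along the motion gives
`B Ẍ (∂X/∂qᵢ) + B Ẋ (D²X (q̇, 1) (eᵢ, 0))`, and by the symmetry of `D²X` the second summand is
`∂T/∂qᵢ`. Finally `Q̇ = M Ẍ`, so `Q̇ ⬝ᵥ ∂X/∂qᵢ = B Ẍ (∂X/∂qᵢ)`.
-/

section Lagrange

variable {E F G : Type*} [NormedAddCommGroup E] [NormedSpace ℝ E]
  [NormedAddCommGroup F] [NormedSpace ℝ F] [NormedAddCommGroup G] [NormedSpace ℝ G]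

theorem HasFDerivAt.half_bilinear_self {B : F →L[ℝ] F →L[ℝ] ℝ} (hB : ∀ u w, B u w = B w u)
    {g : G → F} {g' : G →L[ℝ] F} {x : G} (hg : HasFDerivAt g g' x) :
    HasFDerivAt (fun y => (1 / 2 : ℝ) * B (g y) (g y)) ((B (g x)).comp g') x := by
  refine (((B.hasFDerivAt.comp x hg).clm_apply hg).const_mul (1 / 2 : ℝ)).congr_fderiv ?_
  ext e
  simp [hB (g' e)]
  ring

theorem hasDerivAt_comp_graph {f : E × ℝ → G} {c : ℝ → E} {t : ℝ}
    (hf : DifferentiableAt ℝ f (c t, t)) (hc : DifferentiableAt ℝ c t) :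
    HasDerivAt (fun s => f (c s, s)) (fderiv ℝ f (c t, t) (deriv c t, 1)) t :=
  hf.hasFDerivAt.comp_hasDerivAt (f := fun s => (c s, s)) t
    (hc.hasDerivAt.prodMk (hasDerivAt_id' t))

theorem fderiv_comp_prodMk_left {f : E × ℝ → F} {q : E} {t : ℝ}
    (hf : DifferentiableAt ℝ f (q, t)) :
    fderiv ℝ (fun q' => f (q', t)) q = (fderiv ℝ f (q, t)).comp (ContinuousLinearMap.inl ℝ E ℝ) :=
  (hf.hasFDerivAt.comp q (hasFDerivAt_prodMk_left q t)).fderiv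

theorem fderiv_comp_prodMk_right {f : E × ℝ → F} {q : E} {t : ℝ}
    (hf : DifferentiableAt ℝ f (q, t)) :
    fderiv ℝ (fun t' => f (q, t')) t = (fderiv ℝ f (q, t)).comp (ContinuousLinearMap.inr ℝ E ℝ) :=
  (hf.hasFDerivAt.comp t (hasFDerivAt_prodMk_right q t)).fderiv

noncomputable def velocity (X : E × ℝ → F) (q v : E) (t : ℝ) : F :=
  fderiv ℝ X (q, t) (v, 1)

noncomputable def kineticEnergy (B : F →L[ℝ] F →L[ℝ] ℝ) (X : E × ℝ → F) (q v : E) (t : ℝ) :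
    ℝ :=
  (1 / 2) * B (velocity X q v t) (velocity X q v t)

variable {B : F →L[ℝ] F →L[ℝ] ℝ} {X : E × ℝ → F}

theorem fderiv_kineticEnergy_vel_apply (hB : ∀ u w, B u w = B w u) (q v e : E) (t : ℝ) :
    fderiv ℝ (fun v' => kineticEnergy B X q v' t) v e
      = B (velocity X q v t) (fderiv ℝ X (q, t) (e, 0)) := by
  have hvel : HasFDerivAt (fun v' => velocity X q v' t)
      ((fderiv ℝ X (q, t)).comp (ContinuousLinearMap.inl ℝ E ℝ)) v :=
    (fderiv ℝ X (q, t)).hasFDerivAt.comp v (hasFDerivAt_prodMk_left v 1)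
  unfold kineticEnergy
  rw [(hvel.half_bilinear_self hB).fderiv]
  simp

theorem fderiv_kineticEnergy_pos_apply (hB : ∀ u w, B u w = B w u) {q : E} {t : ℝ}
    (hX : DifferentiableAt ℝ (fderiv ℝ X) (q, t)) (v e : E) :
    fderiv ℝ (fun q' => kineticEnergy B X q' v t) q e
      = B (velocity X q v t) (fderiv ℝ (fderiv ℝ X) (q, t) (e, 0) (v, 1)) := by
  have hvel : HasFDerivAt (fun q' => velocity X q' v t)
      (((fderiv ℝ (fderiv ℝ X) (q, t)).comp (ContinuousLinearMap.inl ℝ E ℝ)).flip (v, 1)) q :=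
    (hX.hasFDerivAt.comp q (hasFDerivAt_prodMk_left q t)).clm_apply (hasFDerivAt_const _ q)
      |>.congr_fderiv (by ext; simp)
  unfold kineticEnergy
  rw [(hvel.half_bilinear_self hB).fderiv]
  simp

theorem differentiableAt_velocity_comp {c : ℝ → E} {t : ℝ}
    (hX : DifferentiableAt ℝ (fderiv ℝ X) (c t, t)) (hc : DifferentiableAt ℝ c t)
    (hc' : DifferentiableAt ℝ (deriv c) t) :
    DifferentiableAt ℝ (fun s => velocity X (c s) (deriv c s) s) t :=
  ((hasDerivAt_comp_graph hX hc).clm_apply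
    (hc'.hasDerivAt.prodMk (hasDerivAt_const t 1))).differentiableAt

theorem apply_deriv_velocity_eq_lagrange_binomial (hB : ∀ u w, B u w = B w u) {c : ℝ → E}
    {t : ℝ} (hX : ContDiffAt ℝ 2 X (c t, t)) (hc : DifferentiableAt ℝ c t)
    (hc' : DifferentiableAt ℝ (deriv c) t) (e : E) :
    B (deriv (fun s => velocity X (c s) (deriv c s) s) t) (fderiv ℝ X (c t, t) (e, 0))
      = deriv (fun s => fderiv ℝ (fun v => kineticEnergy B X (c s) v s) (deriv c s) e) t
        - fderiv ℝ (fun q => kineticEnergy B X q (deriv c t) t) (c t) e := by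
  have hX' : DifferentiableAt ℝ (fderiv ℝ X) (c t, t) :=
    (hX.fderiv_right le_rfl).differentiableAt one_ne_zero
  have hV := (differentiableAt_velocity_comp hX' hc hc').hasDerivAt
  have hW : HasDerivAt (fun s => fderiv ℝ X (c s, s) (e, 0))
      (fderiv ℝ (fderiv ℝ X) (c t, t) (deriv c t, 1) (e, 0)) t := by
    simpa using (hasDerivAt_comp_graph hX' hc).clm_apply (hasDerivAt_const t (e, 0))
  have hBVW : HasDerivAt
      (fun s => B (velocity X (c s) (deriv c s) s) (fderiv ℝ X (c s, s) (e, 0)))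
      (B (deriv (fun s => velocity X (c s) (deriv c s) s) t) (fderiv ℝ X (c t, t) (e, 0))
        + B (velocity X (c t) (deriv c t) t)
            (fderiv ℝ (fderiv ℝ X) (c t, t) (deriv c t, 1) (e, 0))) t :=
    (B.hasFDerivAt.comp_hasDerivAt t hV).clm_apply hW
  have hsymm : fderiv ℝ (fderiv ℝ X) (c t, t) (deriv c t, 1) (e, 0)
      = fderiv ℝ (fderiv ℝ X) (c t, t) (e, 0) (deriv c t, 1) :=
    (hX.isSymmSndFDerivAt (by simp [minSmoothness_of_isRCLikeNormedField])).eq _ _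
  simp only [fderiv_kineticEnergy_vel_apply hB, fderiv_kineticEnergy_pos_apply hB hX']
  rw [hBVW.deriv, hsymm]
  ring

theorem velocity_uncurry_eq_sum {n : ℕ} {X : (Fin n → ℝ) → ℝ → F} {q : Fin n → ℝ} {t : ℝ}
    (hX : DifferentiableAt ℝ (fun p : (Fin n → ℝ) × ℝ => X p.1 p.2) (q, t)) (v : Fin n → ℝ) :
    velocity (fun p => X p.1 p.2) q v t
      = ∑ i, v i • fderiv ℝ (fun q' => X q' t) q (Pi.single i 1)
        + fderiv ℝ (fun t' => X q t') t 1 := by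
  rw [fderiv_comp_prodMk_left (f := fun p => X p.1 p.2) hX,
    fderiv_comp_prodMk_right (f := fun p => X p.1 p.2) hX, velocity]
  simp only [ContinuousLinearMap.coe_comp, Function.comp_apply, ContinuousLinearMap.inl_apply,
    ContinuousLinearMap.inr_apply, ← map_smul, ← map_sum, ← map_add]
  congr
  ext
  · simp [Prod.fst_sum, ← pi_eq_sum_univ' v]
  · simp [Prod.snd_sum]

end Lagrange

theorem momentum_projection_eq_lagrange_binomial_general
    (n d : ℕ)
    (X : (Fin n → ℝ) → ℝ → (Fin d → ℝ))
    (hX : ContDiff ℝ 2 (fun p : (Fin n → ℝ) × ℝ => X p.1 p.2))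
    (M : Matrix (Fin d) (Fin d) ℝ) (hM : M.IsSymm)
    -- the velocity Ẋ as a function of (q, q̇, t)
    (Xvel : (Fin n → ℝ) → (Fin n → ℝ) → ℝ → (Fin d → ℝ))
    (hXvel : ∀ q v t, Xvel q v t =
      (∑ i : Fin n, v i • fderiv ℝ (fun q' => X q' t) q (Pi.single i 1))
        + fderiv ℝ (fun t' => X q t') t 1)
    -- the kinetic energy
    (T : (Fin n → ℝ) → (Fin n → ℝ) → ℝ → ℝ)
    (hT : ∀ q v t, T q v t = (1 / 2) * (M.mulVec (Xvel q v t) ⬝ᵥ Xvel q v t))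
    -- a C² motion
    (c : ℝ → Fin n → ℝ) (hc : ContDiff ℝ 2 c)
    -- the momentum along the motion
    (Q : ℝ → Fin d → ℝ)
    (hQ : ∀ t, Q t = M.mulVec (Xvel (c t) (deriv c t) t)) :
    ∀ (t : ℝ) (i : Fin n),
      deriv Q t ⬝ᵥ fderiv ℝ (fun q' => X q' t) (c t) (Pi.single i 1)
        = deriv (fun s =>
            fderiv ℝ (fun v' => T (c s) v' s) (deriv c s) (Pi.single i 1)) t
          - fderiv ℝ (fun q' => T q' (deriv c t) t) (c t) (Pi.single i 1) := by
  intro t i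
  set B := M.toBilin'.toContinuousBilinearMap
  have hB : ∀ u w, B u w = B w u := (Matrix.isSymm_toBilin'_iff_isSymm.mpr hM).eq
  have hXd : ∀ p, DifferentiableAt ℝ (fun p : (Fin n → ℝ) × ℝ => X p.1 p.2) p :=
    fun _ => (hX.differentiable two_ne_zero).differentiableAt
  obtain rfl : Xvel = velocity (fun p => X p.1 p.2) := by
    ext q v t; rw [hXvel, velocity_uncurry_eq_sum (hXd _)]
  obtain rfl : T = kineticEnergy B (fun p => X p.1 p.2) := by
    ext q v t; simp [hT, kineticEnergy, B, Matrix.toBilin'_apply', dotProduct_comm]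
  obtain rfl : Q = fun s => M *ᵥ velocity (fun p => X p.1 p.2) (c s) (deriv c s) s := funext hQ
  have hc₁ := (hc.differentiable two_ne_zero).differentiableAt (x := t)
  have hc₂ := hc.differentiable_deriv_two.differentiableAt (x := t)
  have hX₂ := hX.contDiffAt (x := (c t, t))
  have hQ' : HasDerivAt (fun s => M *ᵥ velocity (fun p => X p.1 p.2) (c s) (deriv c s) s)
      (M *ᵥ deriv (fun s => velocity (fun p => X p.1 p.2) (c s) (deriv c s) s) t) t :=
    M.mulVecLin.toContinuousLinearMap.hasFDerivAt.comp_hasDerivAt t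
    (differentiableAt_velocity_comp ((hX₂.fderiv_right le_rfl).differentiableAt one_ne_zero)
      hc₁ hc₂).hasDerivAt
  rw [fderiv_comp_prodMk_left (f := fun p => X p.1 p.2) (hXd _),
    ← apply_deriv_velocity_eq_lagrange_binomial hB hX₂ hc₁ hc₂, hQ'.deriv, hB]
  simp [B, Matrix.toBilin'_apply', dotProduct_comm]

/-- With T(q,q̇,t) = ½ (M Ẋ)·Ẋ the kinetic energy, along any C²
motion, Q̇ · ∂X/∂qᵢ = d/dt(∂T/∂q̇ᵢ) − ∂T/∂qᵢ for every i, where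
Q = M Ẋ is the momentum vector. -/
theorem momentum_projection_eq_lagrange_binomial
    (n d : ℕ)
    (X : (Fin n → ℝ) → ℝ → (Fin d → ℝ))
    (hX : ContDiff ℝ 2 (fun p : (Fin n → ℝ) × ℝ => X p.1 p.2))
    (M : Matrix (Fin d) (Fin d) ℝ) (hM : M.IsSymm) (hMpos : M.PosDef)
    -- the velocity Ẋ as a function of (q, q̇, t)
    (Xvel : (Fin n → ℝ) → (Fin n → ℝ) → ℝ → (Fin d → ℝ))
    (hXvel : ∀ q v t, Xvel q v t =
      (∑ i : Fin n, v i • fderiv ℝ (fun q' => X q' t) q (Pi.single i 1))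
        + fderiv ℝ (fun t' => X q t') t 1)
    -- the kinetic energy
    (T : (Fin n → ℝ) → (Fin n → ℝ) → ℝ → ℝ)
    (hT : ∀ q v t, T q v t = (1 / 2) * (M.mulVec (Xvel q v t) ⬝ᵥ Xvel q v t))
    -- a C² motion
    (c : ℝ → Fin n → ℝ) (hc : ContDiff ℝ 2 c)
    -- the momentum along the motion
    (Q : ℝ → Fin d → ℝ)
    (hQ : ∀ t, Q t = M.mulVec (Xvel (c t) (deriv c t) t)) :
    ∀ (t : ℝ) (i : Fin n),
      deriv Q t ⬝ᵥ fderiv ℝ (fun q' => X q' t) (c t) (Pi.single i 1)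
        = deriv (fun s =>
            fderiv ℝ (fun v' => T (c s) v' s) (deriv c s) (Pi.single i 1)) t
          - fderiv ℝ (fun q' => T q' (deriv c t) t) (c t) (Pi.single i 1) :=
  momentum_projection_eq_lagrange_binomial_general n d X hX M hM Xvel hXvel T hT c hc Q hQ
end

section
/- (Equivalence of the projected-Newton and Voronec forms.) Let T, T*, α_ν be C² with T* the constrained kinetic energy, and define B_i^ν as in the nonlinear Voronec equations. Then along any C² motion satisfying the constraints, for each i = 1,…,m: d/dt(∂T/∂q̇ᵢ) − ∂T/∂qᵢ + Σ_{ν=1}^k (∂α_ν/∂q̇ᵢ) ( d/dt(∂T/∂q̇_{m+ν}) − ∂T/∂q_{m+ν} ) = d/dt(∂T*/∂q̇ᵢ) − ∂T*/∂qᵢ − Σ_{ν=1}^k (∂T*/∂q_{m+ν}) (∂α_ν/∂q̇ᵢ) − Σ_{ν=1}^k B_i^ν (∂T/∂q̇_{m+ν}), where derivatives of T are evaluated at q̇_{m+ν} = α_ν. -/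
/-!
Along the motion the velocity is `q̇ = (u, α(q, u, t))` with `u = (q̇₁, …, q̇ₘ)`, so the chain rule
gives `∂T*/∂uᵢ = ∂T/∂q̇ᵢ + Σ_ν (∂α_ν/∂uᵢ) ∂T/∂q̇_{m+ν}` and
`∂T*/∂q_j = ∂T/∂q_j + Σ_ν (∂α_ν/∂q_j) ∂T/∂q̇_{m+ν}`.
Differentiating the first identity in time, the product rule produces `d/dt (∂α_ν/∂uᵢ)`, and the
chain rule along the motion (using `q̇_{m+μ} = α_μ`) identifies it with
`B_i^ν + ∂α_ν/∂qᵢ + Σ_μ (∂α_μ/∂uᵢ)(∂α_ν/∂q_{m+μ})`.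
After these substitutions both sides agree by a rearrangement of finite sums.
-/

open Function ContinuousLinearMap

section ThreeArguments

variable {𝕜 : Type*} [NontriviallyNormedField 𝕜]
  {E F G W : Type*} [NormedAddCommGroup E] [NormedSpace 𝕜 E] [NormedAddCommGroup F]
  [NormedSpace 𝕜 F] [NormedAddCommGroup G] [NormedSpace 𝕜 G] [NormedAddCommGroup W]
  [NormedSpace 𝕜 W] {f : E → F → G → W} {q : E} {u : F} {τ : G}

theorem DifferentiableAt.hasFDerivAt_slice₁ (hf : DifferentiableAt 𝕜 ↿f (q, u, τ)) :
    HasFDerivAt (fun q' => f q' u τ) ((fderiv 𝕜 ↿f (q, u, τ)).comp (inl 𝕜 E (F × G))) q :=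
  hf.hasFDerivAt.comp (f := fun q' => (q', u, τ)) q (hasFDerivAt_prodMk_left q (u, τ))

theorem DifferentiableAt.hasFDerivAt_slice₂ (hf : DifferentiableAt 𝕜 ↿f (q, u, τ)) :
    HasFDerivAt (fun u' => f q u' τ)
      ((fderiv 𝕜 ↿f (q, u, τ)).comp ((inr 𝕜 E (F × G)).comp (inl 𝕜 F G))) u :=
  hf.hasFDerivAt.comp (f := fun u' => (q, u', τ)) u
    ((hasFDerivAt_prodMk_right q (u, τ)).comp (f := fun u' => (u', τ)) u
      (hasFDerivAt_prodMk_left u τ))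

theorem DifferentiableAt.hasFDerivAt_slice₃ (hf : DifferentiableAt 𝕜 ↿f (q, u, τ)) :
    HasFDerivAt (fun τ' => f q u τ')
      ((fderiv 𝕜 ↿f (q, u, τ)).comp ((inr 𝕜 E (F × G)).comp (inr 𝕜 F G))) τ :=
  hf.hasFDerivAt.comp (f := fun τ' => (q, u, τ')) τ
    ((hasFDerivAt_prodMk_right q (u, τ)).comp (f := fun τ' => (u, τ')) τ
      (hasFDerivAt_prodMk_right u τ))

theorem DifferentiableAt.hasFDerivAt_uncurry₃ (hf : DifferentiableAt 𝕜 ↿f (q, u, τ)) :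
    HasFDerivAt ↿f ((fderiv 𝕜 (fun q' => f q' u τ) q).comp (fst 𝕜 E (F × G))
      + (fderiv 𝕜 (fun u' => f q u' τ) u).comp ((fst 𝕜 F G).comp (snd 𝕜 E (F × G)))
      + (fderiv 𝕜 (fun τ' => f q u τ') τ).comp ((snd 𝕜 F G).comp (snd 𝕜 E (F × G)))) (q, u, τ) := by
  refine hf.hasFDerivAt.congr_fderiv ?_
  rw [hf.hasFDerivAt_slice₁.fderiv, hf.hasFDerivAt_slice₂.fderiv, hf.hasFDerivAt_slice₃.fderiv]
  ext <;> simp [Prod.mk_zero_zero]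

theorem HasFDerivAt.comp_uncurry₃ {X : Type*} [NormedAddCommGroup X] [NormedSpace 𝕜 X]
    {Q : X → E} {V : X → F} {g : X → G} {Q' : X →L[𝕜] E} {V' : X →L[𝕜] F} {g' : X →L[𝕜] G}
    {x : X} (hf : DifferentiableAt 𝕜 ↿f (Q x, V x, g x)) (hQ : HasFDerivAt Q Q' x)
    (hV : HasFDerivAt V V' x) (hg : HasFDerivAt g g' x) :
    HasFDerivAt (fun y => f (Q y) (V y) (g y))
      ((fderiv 𝕜 (fun q' => f q' (V x) (g x)) (Q x)).comp Q'
        + (fderiv 𝕜 (fun u' => f (Q x) u' (g x)) (V x)).comp V'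
        + (fderiv 𝕜 (fun τ' => f (Q x) (V x) τ') (g x)).comp g') x := by
  refine (hf.hasFDerivAt_uncurry₃.comp x (hQ.prodMk (hV.prodMk hg))).congr_fderiv ?_
  ext y
  simp

theorem HasDerivAt.comp_uncurry₃ {f : E → F → 𝕜 → W} {Q : 𝕜 → E} {V : 𝕜 → F} {Q' : E}
    {V' : F} {s : 𝕜} (hf : DifferentiableAt 𝕜 ↿f (Q s, V s, s)) (hQ : HasDerivAt Q Q' s)
    (hV : HasDerivAt V V' s) :
    HasDerivAt (fun s => f (Q s) (V s) s)
      (fderiv 𝕜 (fun q' => f q' (V s) s) (Q s) Q' + fderiv 𝕜 (fun u' => f (Q s) u' s) (V s) V'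
        + _root_.deriv (fun τ => f (Q s) (V s) τ) s) s := by
  refine (HasFDerivAt.comp_uncurry₃ hf hQ.hasFDerivAt hV.hasFDerivAt
    (hasFDerivAt_id s)).hasDerivAt.congr_deriv ?_
  rw [add_apply, add_apply]
  simp

theorem ContDiff.differentiable_fderiv_slice₂_apply (hf : ContDiff 𝕜 2 ↿f) (e : F) :
    Differentiable 𝕜 ↿(fun q u τ => fderiv 𝕜 (fun u' => f q u' τ) u e) := by
  have hd : Differentiable 𝕜 ↿f := hf.differentiable two_ne_zero
  have hslice : ↿(fun q u τ => fderiv 𝕜 (fun u' => f q u' τ) u e)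
      = fun p => fderiv 𝕜 ↿f p (0, e, 0) := by
    funext ⟨q, u, τ⟩
    exact congrArg (· e) (hd _).hasFDerivAt_slice₂.fderiv
  rw [hslice]
  exact ((hf.fderiv_right (m := 1) le_rfl).clm_apply contDiff_const).differentiable one_ne_zero

end ThreeArguments

section FinAppend

variable {𝕜 : Type*} [NontriviallyNormedField 𝕜] {m k : ℕ}

variable (𝕜 m k) in
def finAppendCLM :
    (Fin m → 𝕜) × (Fin k → 𝕜) →L[𝕜] Fin (m + k) → 𝕜 :=
  pi (Fin.append (fun r => (proj r).comp (fst 𝕜 _ _)) fun ν => (proj ν).comp (snd 𝕜 _ _))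

@[simp]
theorem finAppendCLM_apply (w : Fin m → 𝕜) (z : Fin k → 𝕜) :
    finAppendCLM 𝕜 m k (w, z) = Fin.append w z := by
  ext j
  refine Fin.addCases (fun r => ?_) (fun ν => ?_) j <;> simp [finAppendCLM]

theorem HasFDerivAt.finAppend {X : Type*} [NormedAddCommGroup X] [NormedSpace 𝕜 X]
    {w : X → Fin m → 𝕜} {z : X → Fin k → 𝕜} {w' : X →L[𝕜] Fin m → 𝕜} {z' : X →L[𝕜] Fin k → 𝕜}
    {x : X} (hw : HasFDerivAt w w' x) (hz : HasFDerivAt z z' x) :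
    HasFDerivAt (fun y => Fin.append (w y) (z y)) ((finAppendCLM 𝕜 m k).comp (w'.prod z')) x := by
  simpa using (finAppendCLM 𝕜 m k).hasFDerivAt.comp x (hw.prodMk hz)

theorem ContinuousLinearMap.apply_eq_sum_single {ι M : Type*} [Fintype ι] [DecidableEq ι]
    [AddCommGroup M] [Module 𝕜 M] [TopologicalSpace M] (φ : (ι → 𝕜) →L[𝕜] M) (x : ι → 𝕜) :
    φ x = ∑ i, x i • φ (Pi.single i 1) := by
  conv_lhs => rw [← Finset.univ_sum_single x]
  simp [map_sum, ← map_smul, ← Pi.single_smul']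

theorem ContinuousLinearMap.apply_finAppend {M : Type*} [AddCommGroup M] [Module 𝕜 M]
    [TopologicalSpace M] (φ : (Fin (m + k) → 𝕜) →L[𝕜] M) (w : Fin m → 𝕜) (z : Fin k → 𝕜) :
    φ (Fin.append w z) = ∑ r, w r • φ (Pi.single (Fin.castAdd k r) 1)
      + ∑ ν, z ν • φ (Pi.single (Fin.natAdd m ν) 1) := by
  rw [φ.apply_eq_sum_single, Fin.sum_univ_add]
  simp only [Fin.append_left, Fin.append_right]

end FinAppend

section ConstrainedKineticEnergy

variable {m k : ℕ} {E : Type*} [NormedAddCommGroup E] [NormedSpace ℝ E]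
  {T : E → (Fin (m + k) → ℝ) → ℝ → ℝ} {α : Fin k → E → (Fin m → ℝ) → ℝ → ℝ}
  {q : E} {u : Fin m → ℝ} {τ : ℝ}

def constrainedKineticEnergy (T : E → (Fin (m + k) → ℝ) → ℝ → ℝ)
    (α : Fin k → E → (Fin m → ℝ) → ℝ → ℝ) (q : E) (u : Fin m → ℝ) (τ : ℝ) : ℝ :=
  T q (Fin.append u fun ν => α ν q u τ) τ

theorem fderiv_constrainedKineticEnergy_velocity
    (hT : DifferentiableAt ℝ ↿T (q, Fin.append u (fun ν => α ν q u τ), τ))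
    (hα : ∀ ν, DifferentiableAt ℝ ↿(α ν) (q, u, τ)) (i : Fin m) :
    fderiv ℝ (fun u' => constrainedKineticEnergy T α q u' τ) u (Pi.single i 1)
      = fderiv ℝ (fun v => T q v τ) (Fin.append u fun ν => α ν q u τ)
          (Pi.single (Fin.castAdd k i) 1)
        + ∑ ν, fderiv ℝ (fun u' => α ν q u' τ) u (Pi.single i 1)
          * fderiv ℝ (fun v => T q v τ) (Fin.append u fun ν => α ν q u τ)
              (Pi.single (Fin.natAdd m ν) 1) := by
  have hV := (hasFDerivAt_id u).finAppend
    (hasFDerivAt_pi.2 fun ν => (hα ν).hasFDerivAt_slice₂.differentiableAt.hasFDerivAt)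
  have h := (hasFDerivAt_const q u).comp_uncurry₃ hT hV (hasFDerivAt_const τ u)
  rw [HasFDerivAt.fderiv (f := fun u' => constrainedKineticEnergy T α q u' τ) h]
  simp [ContinuousLinearMap.apply_finAppend, Pi.single_apply]

theorem fderiv_constrainedKineticEnergy_position
    (hT : DifferentiableAt ℝ ↿T (q, Fin.append u (fun ν => α ν q u τ), τ))
    (hα : ∀ ν, DifferentiableAt ℝ ↿(α ν) (q, u, τ)) (e : E) :
    fderiv ℝ (fun q' => constrainedKineticEnergy T α q' u τ) q e
      = fderiv ℝ (fun q' => T q' (Fin.append u fun ν => α ν q u τ) τ) q e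
        + ∑ ν, fderiv ℝ (fun q' => α ν q' u τ) q e
          * fderiv ℝ (fun v => T q v τ) (Fin.append u fun ν => α ν q u τ)
              (Pi.single (Fin.natAdd m ν) 1) := by
  have hV := (hasFDerivAt_const u q).finAppend
    (hasFDerivAt_pi.2 fun ν => (hα ν).hasFDerivAt_slice₁.differentiableAt.hasFDerivAt)
  have h := (hasFDerivAt_id q).comp_uncurry₃ hT hV (hasFDerivAt_const τ q)
  rw [HasFDerivAt.fderiv (f := fun q' => constrainedKineticEnergy T α q' u τ) h]
  simp [ContinuousLinearMap.apply_finAppend]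

end ConstrainedKineticEnergy

section Motion

variable {m k : ℕ} {α : Fin k → (Fin (m + k) → ℝ) → (Fin m → ℝ) → ℝ → ℝ}
  {c : ℝ → Fin (m + k) → ℝ} {vpart : ℝ → Fin m → ℝ} {t : ℝ}

theorem deriv_eq_finAppend_of_constraints
    (hvpart : ∀ s i, vpart s i = deriv c s (Fin.castAdd k i))
    (hconstr : ∀ s ν, deriv c s (Fin.natAdd m ν) = α ν (c s) (vpart s) s) (s : ℝ) :
    deriv c s = Fin.append (vpart s) fun ν => α ν (c s) (vpart s) s := by
  rw [← Fin.append_castAdd_natAdd (f := deriv c s)]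
  simp only [← hvpart, hconstr]

theorem hasDerivAt_of_eq_deriv_castAdd
    (hvpart : ∀ s i, vpart s i = deriv c s (Fin.castAdd k i))
    (hc' : DifferentiableAt ℝ (deriv c) t) :
    HasDerivAt vpart (fun r => deriv (fun τ => deriv c τ (Fin.castAdd k r)) t) t := by
  obtain rfl : vpart = fun s r => deriv c s (Fin.castAdd k r) := funext₂ hvpart
  exact hasDerivAt_pi.2 fun r => (differentiableAt_pi.1 hc' _).hasDerivAt

noncomputable def voronecCoeff (α : Fin k → (Fin (m + k) → ℝ) → (Fin m → ℝ) → ℝ → ℝ)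
    (c : ℝ → Fin (m + k) → ℝ) (vpart : ℝ → Fin m → ℝ) (t : ℝ) (i : Fin m) (ν : Fin k) : ℝ :=
  (∑ r : Fin m,
    ((fderiv ℝ (fun q' => fderiv ℝ (fun v' => α ν q' v' t) (vpart t) (Pi.single i 1))
        (c t) (Pi.single (Fin.castAdd k r) 1)) * vpart t r
      + (fderiv ℝ (fun v' => fderiv ℝ (fun v'' => α ν (c t) v'' t) v' (Pi.single i 1))
          (vpart t) (Pi.single r 1)) * deriv (fun τ => deriv c τ (Fin.castAdd k r)) t))
  - fderiv ℝ (fun q' => α ν q' (vpart t) t) (c t) (Pi.single (Fin.castAdd k i) 1)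
  + (∑ μ : Fin k,
      ((fderiv ℝ (fun q' => fderiv ℝ (fun v' => α ν q' v' t) (vpart t) (Pi.single i 1))
          (c t) (Pi.single (Fin.natAdd m μ) 1)) * α μ (c t) (vpart t) t
        - (fderiv ℝ (fun v' => α μ (c t) v' t) (vpart t) (Pi.single i 1))
          * fderiv ℝ (fun q' => α ν q' (vpart t) t) (c t) (Pi.single (Fin.natAdd m μ) 1)))
  + deriv (fun t' => fderiv ℝ (fun v' => α ν (c t) v' t') (vpart t) (Pi.single i 1)) t

theorem voronecCoeff_eq {ν : Fin k} (hα : ContDiff ℝ 2 ↿(α ν)) (hc : DifferentiableAt ℝ c t)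
    (hu : HasDerivAt vpart (fun r => deriv (fun τ => deriv c τ (Fin.castAdd k r)) t) t)
    (hvel : deriv c t = Fin.append (vpart t) fun ν => α ν (c t) (vpart t) t) (i : Fin m) :
    voronecCoeff α c vpart t i ν
      = deriv (fun s => fderiv ℝ (fun u' => α ν (c s) u' s) (vpart s) (Pi.single i 1)) t
        - fderiv ℝ (fun q' => α ν q' (vpart t) t) (c t) (Pi.single (Fin.castAdd k i) 1)
        - ∑ μ, fderiv ℝ (fun u' => α μ (c t) u' t) (vpart t) (Pi.single i 1)
          * fderiv ℝ (fun q' => α ν q' (vpart t) t) (c t) (Pi.single (Fin.natAdd m μ) 1) := by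
  have h := HasDerivAt.comp_uncurry₃ (hα.differentiable_fderiv_slice₂_apply (Pi.single i 1) _)
    hc.hasDerivAt hu
  rw [h.deriv, hvel, ContinuousLinearMap.apply_finAppend,
    ContinuousLinearMap.apply_eq_sum_single (fderiv ℝ _ (vpart t))]
  simp only [voronecCoeff, smul_eq_mul, Finset.sum_add_distrib, Finset.sum_sub_distrib, mul_comm]
  ring

theorem hasDerivAt_constrainedMomentum {T : (Fin (m + k) → ℝ) → (Fin (m + k) → ℝ) → ℝ → ℝ}
    (hT : ContDiff ℝ 2 ↿T) (hα : ∀ ν, ContDiff ℝ 2 ↿(α ν)) (hc : DifferentiableAt ℝ c t)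
    (hc' : DifferentiableAt ℝ (deriv c) t) (hu : DifferentiableAt ℝ vpart t)
    (hvel : ∀ s, deriv c s = Fin.append (vpart s) fun ν => α ν (c s) (vpart s) s) (i : Fin m) :
    HasDerivAt
      (fun s => fderiv ℝ (fun u' => constrainedKineticEnergy T α (c s) u' s) (vpart s)
        (Pi.single i 1))
      (deriv (fun s => fderiv ℝ (fun v => T (c s) v s) (deriv c s)
          (Pi.single (Fin.castAdd k i) 1)) t
        + ∑ ν, (deriv (fun s => fderiv ℝ (fun u' => α ν (c s) u' s) (vpart s) (Pi.single i 1)) t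
            * fderiv ℝ (fun v => T (c t) v t) (deriv c t) (Pi.single (Fin.natAdd m ν) 1)
          + fderiv ℝ (fun u' => α ν (c t) u' t) (vpart t) (Pi.single i 1)
            * deriv (fun s => fderiv ℝ (fun v => T (c s) v s) (deriv c s)
                (Pi.single (Fin.natAdd m ν) 1)) t)) t := by
  have hp : ∀ j, DifferentiableAt ℝ
      (fun s => fderiv ℝ (fun v => T (c s) v s) (deriv c s) (Pi.single j 1)) t := fun j =>
    (hT.differentiable_fderiv_slice₂_apply _ _).comp t (hc.prodMk (hc'.prodMk differentiableAt_id))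
  have ha : ∀ ν, DifferentiableAt ℝ
      (fun s => fderiv ℝ (fun u' => α ν (c s) u' s) (vpart s) (Pi.single i 1)) t := fun ν =>
    ((hα ν).differentiable_fderiv_slice₂_apply _ _).comp t
      (hc.prodMk (hu.prodMk differentiableAt_id))
  have hsplit : (fun s => fderiv ℝ (fun u' => constrainedKineticEnergy T α (c s) u' s) (vpart s)
      (Pi.single i 1)) = fun s =>
        fderiv ℝ (fun v => T (c s) v s) (deriv c s) (Pi.single (Fin.castAdd k i) 1)
        + ∑ ν, fderiv ℝ (fun u' => α ν (c s) u' s) (vpart s) (Pi.single i 1)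
          * fderiv ℝ (fun v => T (c s) v s) (deriv c s) (Pi.single (Fin.natAdd m ν) 1) := by
    funext s
    rw [fderiv_constrainedKineticEnergy_velocity (hT.differentiable two_ne_zero _)
      (fun ν => (hα ν).differentiable two_ne_zero _), ← hvel s]
  rw [hsplit]
  exact (hp _).hasDerivAt.add
    (HasDerivAt.fun_sum fun ν _ => (ha ν).hasDerivAt.mul (hp _).hasDerivAt)

end Motion

/-- In the application `p`, `P`, `F` are the momenta `∂T/∂q̇_{m+ν}`, their time derivatives and the
forces `∂T/∂q_{m+ν}` (`P₀`, `F₀` those of index `i`), `a = ∂α/∂uᵢ` with time derivative `a'`,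
`r = ∂α/∂qᵢ` and `Q ν μ = ∂α_μ/∂q_{m+ν}`. -/
theorem voronec_rearrangement {R ι : Type*} [CommRing R] [Fintype ι] (P₀ F₀ : R)
    (a a' P F p r : ι → R) (Q : ι → ι → R) :
    P₀ - F₀ + ∑ ν, a ν * (P ν - F ν)
      = (P₀ + ∑ ν, (a' ν * p ν + a ν * P ν)) - (F₀ + ∑ ν, r ν * p ν)
        - ∑ ν, (F ν + ∑ μ, Q ν μ * p μ) * a ν
        - ∑ ν, (a' ν - r ν - ∑ μ, a μ * Q μ ν) * p ν := by
  have hswap : ∑ ν, (∑ μ, Q ν μ * p μ) * a ν = ∑ ν, (∑ μ, a μ * Q μ ν) * p ν := by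
    simp only [Finset.sum_mul]
    rw [Finset.sum_comm]
    exact Finset.sum_congr rfl fun _ _ => Finset.sum_congr rfl fun _ _ => by ring
  simp only [add_mul, sub_mul, mul_sub, Finset.sum_add_distrib, Finset.sum_sub_distrib, hswap]
  simp only [mul_comm (F _)]
  ring

/-- Equivalence of the projected-Newton and Voronec forms:
along a C² motion satisfying the constraints, for each i = 1,…,m,
d/dt(∂T/∂q̇ᵢ) − ∂T/∂qᵢ + Σ_ν (∂α_ν/∂q̇ᵢ)(d/dt(∂T/∂q̇_{m+ν}) − ∂T/∂q_{m+ν})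
 = d/dt(∂T*/∂q̇ᵢ) − ∂T*/∂qᵢ − Σ_ν (∂T*/∂q_{m+ν})(∂α_ν/∂q̇ᵢ)
   − Σ_ν B_i^ν ∂T/∂q̇_{m+ν}. -/
theorem projected_newton_eq_voronec_form
    (m k : ℕ)
    (T : (Fin (m + k) → ℝ) → (Fin (m + k) → ℝ) → ℝ → ℝ)
    (hT : ContDiff ℝ 2
      (fun p : (Fin (m + k) → ℝ) × (Fin (m + k) → ℝ) × ℝ => T p.1 p.2.1 p.2.2))
    (α : Fin k → (Fin (m + k) → ℝ) → (Fin m → ℝ) → ℝ → ℝ)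
    (hα : ∀ ν, ContDiff ℝ 2
      (fun p : (Fin (m + k) → ℝ) × (Fin m → ℝ) × ℝ => α ν p.1 p.2.1 p.2.2))
    -- the constrained kinetic energy
    (Tstar : (Fin (m + k) → ℝ) → (Fin m → ℝ) → ℝ → ℝ)
    (hTstar : ∀ q u t, Tstar q u t = T q (Fin.append u (fun ν => α ν q u t)) t)
    -- a C² motion
    (c : ℝ → Fin (m + k) → ℝ) (hc : ContDiff ℝ 2 c)
    (vpart : ℝ → Fin m → ℝ)
    (hvpart : ∀ t i, vpart t i = deriv c t (Fin.castAdd k i))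
    -- the motion satisfies the constraints
    (hconstr : ∀ t ν, deriv c t (Fin.natAdd m ν) = α ν (c t) (vpart t) t)
    (t : ℝ)
    -- the nonlinear Voronec coefficients B_i^ν at time t
    (B : Fin m → Fin k → ℝ)
    (hB : ∀ i ν, B i ν =
      (∑ r : Fin m,
        ((fderiv ℝ (fun q' =>
             fderiv ℝ (fun v' => α ν q' v' t) (vpart t) (Pi.single i 1))
           (c t) (Pi.single (Fin.castAdd k r) 1)) * vpart t r
         + (fderiv ℝ (fun v' =>
              fderiv ℝ (fun v'' => α ν (c t) v'' t) v' (Pi.single i 1))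
            (vpart t) (Pi.single r 1))
            * deriv (fun τ => deriv c τ (Fin.castAdd k r)) t))
      - fderiv ℝ (fun q' => α ν q' (vpart t) t) (c t) (Pi.single (Fin.castAdd k i) 1)
      + (∑ μ : Fin k,
          ((fderiv ℝ (fun q' =>
               fderiv ℝ (fun v' => α ν q' v' t) (vpart t) (Pi.single i 1))
             (c t) (Pi.single (Fin.natAdd m μ) 1)) * α μ (c t) (vpart t) t
           - (fderiv ℝ (fun v' => α μ (c t) v' t) (vpart t) (Pi.single i 1))
               * fderiv ℝ (fun q' => α ν q' (vpart t) t) (c t)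
                   (Pi.single (Fin.natAdd m μ) 1)))
      + deriv (fun t' =>
          fderiv ℝ (fun v' => α ν (c t) v' t') (vpart t) (Pi.single i 1)) t) :
    ∀ i : Fin m,
      deriv (fun s =>
          fderiv ℝ (fun v' => T (c s) v' s) (deriv c s)
            (Pi.single (Fin.castAdd k i) 1)) t
      - fderiv ℝ (fun q' => T q' (deriv c t) t) (c t) (Pi.single (Fin.castAdd k i) 1)
      + ∑ ν : Fin k,
          (fderiv ℝ (fun v' => α ν (c t) v' t) (vpart t) (Pi.single i 1))
            * (deriv (fun s =>
                  fderiv ℝ (fun v' => T (c s) v' s) (deriv c s)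
                    (Pi.single (Fin.natAdd m ν) 1)) t
               - fderiv ℝ (fun q' => T q' (deriv c t) t) (c t)
                   (Pi.single (Fin.natAdd m ν) 1))
      =
      deriv (fun s =>
          fderiv ℝ (fun u' => Tstar (c s) u' s) (vpart s) (Pi.single i 1)) t
      - fderiv ℝ (fun q' => Tstar q' (vpart t) t) (c t) (Pi.single (Fin.castAdd k i) 1)
      - ∑ ν : Fin k,
          (fderiv ℝ (fun q' => Tstar q' (vpart t) t) (c t)
              (Pi.single (Fin.natAdd m ν) 1))
            * fderiv ℝ (fun v' => α ν (c t) v' t) (vpart t) (Pi.single i 1)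
      - ∑ ν : Fin k,
          B i ν * fderiv ℝ (fun v' => T (c t) v' t) (deriv c t)
            (Pi.single (Fin.natAdd m ν) 1) := by
  intro i
  obtain rfl : Tstar = constrainedKineticEnergy T α := funext₃ hTstar
  have hc₁ : Differentiable ℝ c := hc.differentiable two_ne_zero
  have hc₂ : Differentiable ℝ (deriv c) :=
    (ContDiff.deriv' (n := 1) hc).differentiable one_ne_zero
  have hvel := deriv_eq_finAppend_of_constraints hvpart hconstr
  have hu := hasDerivAt_of_eq_deriv_castAdd hvpart (hc₂ t)
  have hB' ν : B i ν = _ := (hB i ν).trans (voronecCoeff_eq (hα ν) (hc₁ t) hu (hvel t) i)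
  rw [(hasDerivAt_constrainedMomentum hT hα (hc₁ t) (hc₂ t) hu.differentiableAt hvel i).deriv]
  simp only [fderiv_constrainedKineticEnergy_position (hT.differentiable two_ne_zero _)
    (fun ν => (hα ν).differentiable two_ne_zero _), ← hvel t, hB']
  exact voronec_rearrangement _ _ _ _ _ _ _ _ _
end
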